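/- Let C be an F_q-linear code of length n and dimension k with q = r^h, and let Tr: C^⊥ → F_r^n denote the componentwise trace map restricted to the dual code C^⊥. Then dim_{F_r}(C ∩ F_r^n) = n - h(n - k) + dim_{F_r} ker(Tr). (Véron's dimension formula) -/

import Mathlib

/-- The subfield subcode `C ∩ F_r^n` of an `F_q`-linear code, as an `F_r`-linear code. -/
def subfieldSubcode (Fr Fq : Type) [Field Fr] [Field Fq] [Algebra Fr Fq] (n : ℕ)
    (C : Submodule Fq (Fin n → Fq)) : Submodule Fr (Fin n → Fr) where
  carrier := {v | (fun i => algebraMap Fr Fq (v i)) ∈ C}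
  add_mem' := by
    intro a b ha hb
    have h : (fun i => algebraMap Fr Fq ((a + b) i))
        = (fun i => algebraMap Fr Fq (a i)) + (fun i => algebraMap Fr Fq (b i)) := by
      funext i; simp
    simp only [Set.mem_setOf_eq, h]
    exact C.add_mem ha hb
  zero_mem' := by
    have h : (fun i => algebraMap Fr Fq ((0 : Fin n → Fr) i)) = (0 : Fin n → Fq) := by
      funext i; simp
    simp only [Set.mem_setOf_eq, h]
    exact C.zero_mem
  smul_mem' := by
    intro r v hv
    have h : (fun i => algebraMap Fr Fq ((r • v) i))
        = algebraMap Fr Fq r • (fun i => algebraMap Fr Fq (v i)) := by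
      funext i; simp [Algebra.smul_def]
    simp only [Set.mem_setOf_eq, h]
    exact C.smul_mem _ hv

/-- The dual code of a linear code with respect to the standard bilinear form. -/
def dualCode (K : Type) [Field K] (n : ℕ) (C : Submodule K (Fin n → K)) :
    Submodule K (Fin n → K) where
  carrier := {x | ∀ c ∈ C, ∑ i, x i * c i = 0}
  add_mem' := by
    intro a b ha hb c hc
    simp [Pi.add_apply, add_mul, Finset.sum_add_distrib, ha c hc, hb c hc]
  zero_mem' := by simp
  smul_mem' := by
    intro r x hx c hc
    simp [Pi.smul_apply, smul_eq_mul, mul_assoc, ← Finset.mul_sum, hx c hc]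

/-- The componentwise trace map restricted to the dual code, as an `F_r`-linear map. -/
noncomputable def traceMapOnDual (Fr Fq : Type) [Field Fr] [Field Fq] [Algebra Fr Fq] (n : ℕ)
    (C : Submodule Fq (Fin n → Fq)) :
    (Submodule.restrictScalars Fr (dualCode Fq n C)) →ₗ[Fr] (Fin n → Fr) where
  toFun c := fun i => Algebra.trace Fr Fq (c.1 i)
  map_add' := by intro a b; funext i; simp
  map_smul' := by intro r a; funext i; simp

/-!
By Delsarte's theorem the subfield subcode `C ∩ F_r^n` is the dual of the trace code `Tr(C^⊥)`;
the nontrivial inclusion holds because the trace form of the separable extension `F_q / F_r` is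
nondegenerate. Hence `dim (C ∩ F_r^n) = n - dim Tr(C^⊥)`, and rank–nullity for `Tr` on the
`F_r`-space `C^⊥` of dimension `h (n - k)` gives the formula.
-/

open Module

section DualCode

variable {K : Type} [Field K] {n : ℕ}

lemma dualCode_eq_dualCoannihilator (C : Submodule K (Fin n → K)) :
    dualCode K n C = (C.map (dotProductEquiv K (Fin n)).toLinearMap).dualCoannihilator := by
  ext x
  simp only [Submodule.mem_dualCoannihilator, Submodule.mem_map, forall_exists_index, and_imp,
    forall_apply_eq_imp_iff₂, LinearEquiv.coe_coe, dotProductEquiv_apply_apply, dotProduct,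
    mul_comm]
  rfl

lemma finrank_dualCode_add_finrank (C : Submodule K (Fin n → K)) :
    finrank K (dualCode K n C) + finrank K C = n := by
  rw [dualCode_eq_dualCoannihilator, add_comm,
    (LinearEquiv.submoduleMap (dotProductEquiv K (Fin n)) C).finrank_eq,
    Subspace.finrank_add_finrank_dualCoannihilator_eq, finrank_fin_fun]

lemma dualCode_dualCode (C : Submodule K (Fin n → K)) :
    dualCode K n (dualCode K n C) = C := by
  have hle : C ≤ dualCode K n (dualCode K n C) := fun c hc x hx => by
    simpa only [mul_comm] using hx c hc
  refine (Submodule.eq_of_le_of_finrank_le hle ?_).symm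
  have := finrank_dualCode_add_finrank C
  have := finrank_dualCode_add_finrank (dualCode K n C)
  omega

end DualCode

section Delsarte

variable {K L : Type} [Field K] [Field L] [Algebra K L] {n : ℕ}

lemma sum_mul_trace_eq_trace_sum (v : Fin n → K) (w : Fin n → L) :
    ∑ i, v i * Algebra.trace K L (w i)
      = Algebra.trace K L (∑ i, algebraMap K L (v i) * w i) := by
  simp only [map_sum, ← Algebra.smul_def, map_smul, smul_eq_mul]

variable [FiniteDimensional K L] [Algebra.IsSeparable K L]

theorem subfieldSubcode_eq_dualCode_range_traceMapOnDual (C : Submodule L (Fin n → L)) :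
    subfieldSubcode K L n C = dualCode K n (LinearMap.range (traceMapOnDual K L n C)) := by
  ext v
  change (fun i => algebraMap K L (v i)) ∈ C ↔ _
  nth_rw 1 [← dualCode_dualCode C]
  constructor
  · rintro hv _ ⟨w, rfl⟩
    rw [traceMapOnDual, LinearMap.coe_mk, AddHom.coe_mk, sum_mul_trace_eq_trace_sum,
      hv w w.2, map_zero]
  · intro hv w hw
    refine (traceForm_nondegenerate K L).1 _ fun a => ?_
    have := hv _ ⟨⟨a • w, Submodule.smul_mem _ a hw⟩, rfl⟩
    rw [traceMapOnDual, LinearMap.coe_mk, AddHom.coe_mk, sum_mul_trace_eq_trace_sum] at this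
    rw [Algebra.traceForm_apply, ← this, Finset.sum_mul]
    refine congrArg _ (Finset.sum_congr rfl fun i _ => ?_)
    simp only [Pi.smul_apply, smul_eq_mul]
    ring

end Delsarte

lemma Submodule.finrank_restrictScalars {K L : Type} [Field K] [Field L] [Algebra K L]
    {V : Type} [AddCommGroup V] [Module K V] [Module L V] [IsScalarTower K L V]
    (W : Submodule L V) :
    finrank K (W.restrictScalars K) = finrank K L * finrank L W := by
  rw [finrank_mul_finrank K L W]
  exact ((Submodule.restrictScalarsEquiv K L V W).restrictScalars K).finrank_eq

lemma finrank_eq_of_card_eq_pow {K L : Type} [Field K] [Fintype K] [AddCommGroup L] [Module K L]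
    [Fintype L] {h : ℕ} (hcard : Fintype.card L = Fintype.card K ^ h) : finrank K L = h :=
  Nat.pow_right_injective Fintype.one_lt_card (card_eq_pow_finrank.symm.trans hcard)

theorem veron_dimension_formula_general
    (r h n k : ℕ)
    (Fr Fq : Type) [Field Fr] [Field Fq] [Fintype Fr] [Fintype Fq] [Algebra Fr Fq]
    (hcr : Fintype.card Fr = r) (hcq : Fintype.card Fq = r ^ h)
    (C : Submodule Fq (Fin n → Fq)) (hk : Module.finrank Fq C = k) :
    (Module.finrank Fr (subfieldSubcode Fr Fq n C) : ℤ)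
      = (n : ℤ) - h * (n - k)
        + Module.finrank Fr (LinearMap.ker (traceMapOnDual Fr Fq n C)) := by
  have hdeg : finrank Fr Fq = h := finrank_eq_of_card_eq_pow (hcr ▸ hcq)
  have hsub : finrank Fr (subfieldSubcode Fr Fq n C)
      + finrank Fr (LinearMap.range (traceMapOnDual Fr Fq n C)) = n := by
    rw [subfieldSubcode_eq_dualCode_range_traceMapOnDual]
    exact finrank_dualCode_add_finrank _
  have hrank := LinearMap.finrank_range_add_finrank_ker (traceMapOnDual Fr Fq n C)
  rw [Submodule.finrank_restrictScalars, hdeg] at hrank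
  have hdual := finrank_dualCode_add_finrank C
  rw [hk] at hdual
  zify at hsub hrank hdual
  linear_combination hsub - hrank - (h : ℤ) * hdual

/-- Véron's dimension formula:
`dim_{F_r}(C ∩ F_r^n) = n - h (n - k) + dim_{F_r} ker (Tr : C^⊥ → F_r^n)`. -/
theorem veron_dimension_formula
    (r h n k : ℕ) (hh : 1 ≤ h) (hpp : ∃ p m : ℕ, p.Prime ∧ 0 < m ∧ r = p ^ m)
    (Fr Fq : Type) [Field Fr] [Field Fq] [Fintype Fr] [Fintype Fq] [Algebra Fr Fq]
    (hcr : Fintype.card Fr = r) (hcq : Fintype.card Fq = r ^ h)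
    (C : Submodule Fq (Fin n → Fq)) (hk : Module.finrank Fq C = k) :
    (Module.finrank Fr (subfieldSubcode Fr Fq n C) : ℤ)
      = (n : ℤ) - h * (n - k)
        + Module.finrank Fr (LinearMap.ker (traceMapOnDual Fr Fq n C)) :=
  veron_dimension_formula_general r h n k Fr Fq hcr hcq C hk
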